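/- Let X and P be separable metrizable spaces, D ⊆ X, and h : D → P a function of Baire class 1 (i.e., Σ^0_2-measurable). Let B_P be a countable topological basis of P. If h ∉ dec(Σ^0_1, Δ^0_3), then there exist V ∈ B_P and sets E ⊆ F ⊆ cl_X(D), both closed in X, satisfying: (a) for every open set U ⊆ X with E ∩ U ≠ ∅, the restriction of h to h⁻¹(V) ∩ U ∩ E is not in dec(Σ^0_1, Δ^0_3); (b) for every open set U ⊆ X with F ∩ U ≠ ∅, the restriction of h to h⁻¹(P ∖ cl_P(V)) ∩ F ∩ U is not in dec(Σ^0_1, Δ^0_3), where cl_P(V) denotes the closure of V in P; (c) E ∩ D ≠ ∅. -/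
import Mathlib
set_option linter.unusedSectionVars false
set_option maxHeartbeats 1000000

open Set Topology

def IsFsigma {X : Type*} [TopologicalSpace X] (A : Set X) : Prop :=
  ∃ F : ℕ → Set X, (∀ n, IsClosed (F n)) ∧ A = ⋃ n, F n

def IsSigma03 {X : Type*} [TopologicalSpace X] (A : Set X) : Prop :=
  ∃ G : ℕ → Set X, (∀ n, IsGδ (G n)) ∧ A = ⋃ n, G n

def IsDelta03 {X : Type*} [TopologicalSpace X] (A : Set X) : Prop :=
  IsSigma03 A ∧ IsSigma03 Aᶜ

section DST
variable {Z : Type*} [TopologicalSpace Z] {A B : Set Z}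

lemma IsFsigma.compl_isGδ (h : IsFsigma A) : IsGδ Aᶜ := by
  obtain ⟨F, hF, rfl⟩ := h
  rw [compl_iUnion]
  exact IsGδ.iInter fun n => (hF n).isOpen_compl.isGδ

lemma IsGδ.compl_isFsigma (h : IsGδ A) : IsFsigma Aᶜ := by
  obtain ⟨T, hTo, hTc, rfl⟩ := h
  rcases T.eq_empty_or_nonempty with rfl | hne
  · refine ⟨fun _ => ∅, fun _ => isClosed_empty, ?_⟩
    simp
  · obtain ⟨f, rfl⟩ := hTc.exists_eq_range hne
    refine ⟨fun n => (f n)ᶜ, fun n => (hTo _ (mem_range_self n)).isClosed_compl, ?_⟩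
    rw [sInter_range, compl_iInter]

lemma IsGδ.isSigma03 (h : IsGδ A) : IsSigma03 A :=
  ⟨fun _ => A, fun _ => h, (iUnion_const A).symm⟩

lemma isSigma03_iUnion_isGδ {ι : Sort*} [Countable ι] {G : ι → Set Z}
    (h : ∀ i, IsGδ (G i)) : IsSigma03 (⋃ i, G i) := by
  rcases isEmpty_or_nonempty ι with hι | hι
  · refine ⟨fun _ => ∅, fun _ => IsGδ.empty, by simp⟩
  · obtain ⟨f, hf⟩ := exists_surjective_nat ι
    exact ⟨fun n => G (f n), fun n => h _, (hf.iUnion_comp G).symm⟩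

lemma isSigma03_iUnion {ι : Type*} [Countable ι] {S : ι → Set Z}
    (h : ∀ i, IsSigma03 (S i)) : IsSigma03 (⋃ i, S i) := by
  choose G hG hGeq using h
  have : (⋃ i, S i) = ⋃ p : ι × ℕ, G p.1 p.2 := by
    ext x; simp only [mem_iUnion, Prod.exists]
    constructor
    · rintro ⟨i, hx⟩; rw [hGeq i] at hx; obtain ⟨n, hn⟩ := mem_iUnion.1 hx; exact ⟨i, n, hn⟩
    · rintro ⟨i, n, hn⟩; exact ⟨i, (hGeq i) ▸ mem_iUnion.2 ⟨n, hn⟩⟩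
  rw [this]
  exact isSigma03_iUnion_isGδ fun p => hG p.1 p.2

lemma IsSigma03.union (hA : IsSigma03 A) (hB : IsSigma03 B) : IsSigma03 (A ∪ B) := by
  rw [union_eq_iUnion]
  exact isSigma03_iUnion (by rintro (_|_) <;> simpa)

lemma IsSigma03.inter (hA : IsSigma03 A) (hB : IsSigma03 B) : IsSigma03 (A ∩ B) := by
  obtain ⟨G, hG, rfl⟩ := hA
  obtain ⟨H, hH, rfl⟩ := hB
  have : (⋃ n, G n) ∩ (⋃ n, H n) = ⋃ p : ℕ × ℕ, G p.1 ∩ H p.2 := by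
    ext x; simp only [mem_inter_iff, mem_iUnion, Prod.exists, mem_inter_iff]
    tauto
  rw [this]
  exact isSigma03_iUnion_isGδ fun p => (hG p.1).inter (hH p.2)

variable [TopologicalSpace.PseudoMetrizableSpace Z]

lemma IsClosed.isGδ' (h : IsClosed A) : IsGδ A := by
  letI := TopologicalSpace.pseudoMetrizableSpacePseudoMetric Z
  exact h.isGδ

lemma IsFsigma.isSigma03 (h : IsFsigma A) : IsSigma03 A := by
  obtain ⟨F, hF, rfl⟩ := h
  exact isSigma03_iUnion_isGδ fun n => (hF n).isGδ'

lemma IsGδ.isDelta03 (h : IsGδ A) : IsDelta03 A :=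
  ⟨h.isSigma03, h.compl_isFsigma.isSigma03⟩

lemma IsFsigma.isDelta03 (h : IsFsigma A) : IsDelta03 A :=
  ⟨h.isSigma03, h.compl_isGδ.isSigma03⟩

lemma IsClosed.isDelta03 (h : IsClosed A) : IsDelta03 A := h.isGδ'.isDelta03

lemma IsOpen.isDelta03 (h : IsOpen A) : IsDelta03 A := h.isGδ.isDelta03

lemma IsDelta03.compl (h : IsDelta03 A) : IsDelta03 Aᶜ := ⟨h.2, by rw [compl_compl]; exact h.1⟩

lemma IsDelta03.inter (hA : IsDelta03 A) (hB : IsDelta03 B) : IsDelta03 (A ∩ B) :=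
  ⟨hA.1.inter hB.1, by rw [compl_inter]; exact hA.2.union hB.2⟩

lemma isDelta03_univ : IsDelta03 (univ : Set Z) := isOpen_univ.isDelta03

end DST

section Lift
variable {Z W : Type*} [TopologicalSpace Z] [TopologicalSpace W] {A : Set Z}

lemma IsGδ.preimage' {e : W → Z} (he : Continuous e) (h : IsGδ A) : IsGδ (e ⁻¹' A) := by
  obtain ⟨T, hTo, hTc, rfl⟩ := h
  rw [sInter_eq_biInter, preimage_iInter₂]
  exact IsGδ.biInter hTc fun t ht => ((hTo t ht).preimage he).isGδ

lemma IsSigma03.preimage {e : W → Z} (he : Continuous e) (h : IsSigma03 A) :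
    IsSigma03 (e ⁻¹' A) := by
  obtain ⟨G, hG, rfl⟩ := h
  rw [preimage_iUnion]
  exact isSigma03_iUnion_isGδ fun n => (hG n).preimage' he

lemma IsDelta03.preimage {e : W → Z} (he : Continuous e) (h : IsDelta03 A) :
    IsDelta03 (e ⁻¹' A) :=
  ⟨h.1.preimage he, by rw [← preimage_compl]; exact h.2.preimage he⟩

lemma isGδ_subtype_lift {S : Set Z} {A : Set ↥S} (h : IsGδ A) :
    ∃ B : Set Z, IsGδ B ∧ A = Subtype.val ⁻¹' B := by
  obtain ⟨T, hTo, hTc, rfl⟩ := h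
  have : ∀ t ∈ T, ∃ u : Set Z, IsOpen u ∧ t = Subtype.val ⁻¹' u := by
    intro t ht
    obtain ⟨u, hu, hequ⟩ := isOpen_induced_iff.1 (hTo t ht)
    exact ⟨u, hu, hequ.symm⟩
  choose u hu hequ using this
  refine ⟨⋂ t ∈ T, ⋂ (ht : t ∈ T), u t ht, ?_, ?_⟩
  · exact IsGδ.biInter hTc fun t ht => IsGδ.iInter fun ht' => (hu t ht').isGδ
  · rw [sInter_eq_biInter]
    simp only [preimage_iInter]
    refine iInter_congr fun t => iInter_congr fun ht => ?_
    ext x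
    simp only [mem_iInter, mem_preimage]
    constructor
    · intro hx i
      rw [hequ t i] at hx
      exact hx
    · intro H
      rw [hequ t ht]
      exact H ht

lemma isSigma03_subtype_lift {S : Set Z} {A : Set ↥S} (h : IsSigma03 A) :
    ∃ B : Set Z, IsSigma03 B ∧ A = Subtype.val ⁻¹' B := by
  obtain ⟨G, hG, rfl⟩ := h
  choose B hB hBeq using fun n => isGδ_subtype_lift (hG n)
  refine ⟨⋃ n, B n, isSigma03_iUnion_isGδ hB, ?_⟩
  rw [preimage_iUnion]
  exact iUnion_congr hBeq

end Lift

def Sigma2Measurable {X Y : Type*} [TopologicalSpace X] [TopologicalSpace Y]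
    (f : X → Y) : Prop :=
  ∀ U : Set Y, IsOpen U → IsFsigma (f ⁻¹' U)

def Sigma3Measurable {X Y : Type*} [TopologicalSpace X] [TopologicalSpace Y]
    (f : X → Y) : Prop :=
  ∀ U : Set Y, IsOpen U → IsSigma03 (f ⁻¹' U)

def DecSigma2 {X Y : Type*} [TopologicalSpace X] [TopologicalSpace Y]
    (f : X → Y) : Prop :=
  ∃ A : ℕ → Set X, (∀ m n, m ≠ n → Disjoint (A m) (A n)) ∧ (⋃ n, A n) = Set.univ ∧
    (∀ n, IsDelta03 (A n)) ∧ ∀ n, Sigma2Measurable ((A n).restrict f)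

def DecCont {X Y : Type*} [TopologicalSpace X] [TopologicalSpace Y]
    (f : X → Y) : Prop :=
  ∃ A : ℕ → Set X, (∀ m n, m ≠ n → Disjoint (A m) (A n)) ∧ (⋃ n, A n) = Set.univ ∧
    (∀ n, IsDelta03 (A n)) ∧ ∀ n, Continuous ((A n).restrict f)

section Dec
variable {Z W Y : Type*} [TopologicalSpace Z] [TopologicalSpace W] [TopologicalSpace Y]
  {f : Z → Y}

lemma isDelta03_univ' : IsDelta03 (univ : Set Z) :=
  ⟨IsGδ.univ.isSigma03, by rw [compl_univ]; exact IsGδ.empty.isSigma03⟩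

lemma isDelta03_empty' : IsDelta03 (∅ : Set Z) :=
  ⟨IsGδ.empty.isSigma03, by rw [compl_empty]; exact IsGδ.univ.isSigma03⟩

lemma continuous_of_isEmpty [IsEmpty Z] (g : Z → Y) : Continuous g := by
  refine ⟨fun s _ => ?_⟩
  have : g ⁻¹' s = ∅ := eq_empty_of_isEmpty _
  rw [this]; exact isOpen_empty

lemma decCont_of_isEmpty [IsEmpty Z] (g : Z → Y) : DecCont g := by
  have hu : (univ : Set Z) = ∅ := eq_empty_of_isEmpty _
  haveI : IsEmpty (↥(univ : Set Z)) := ⟨fun x => IsEmpty.elim ‹_› x.1⟩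
  exact ⟨fun _ => univ, fun m n _ => by rw [hu]; exact disjoint_empty _,
    iUnion_const _, fun n => isDelta03_univ', fun n => continuous_of_isEmpty _⟩

lemma decCont_of_continuous (hf : Continuous f) : DecCont f := by
  haveI : IsEmpty (↥(∅ : Set Z)) := ⟨fun x => x.2⟩
  refine ⟨fun n => Nat.casesOn n univ fun _ => ∅, fun m n hmn => ?_, ?_, fun n => ?_, fun n => ?_⟩
  · match m, n with
    | 0, 0 => exact absurd rfl hmn
    | 0, (k+1) => exact disjoint_empty _
    | (k+1), n => exact (disjoint_empty _).symm
  · apply eq_univ_of_univ_subset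
    intro x _
    exact mem_iUnion.2 ⟨0, mem_univ x⟩
  · match n with
    | 0 => exact isDelta03_univ'
    | (k+1) => exact isDelta03_empty'
  · match n with
    | 0 => exact hf.comp continuous_subtype_val
    | (k+1) => exact continuous_of_isEmpty _

lemma DecCont.comp_continuous {e : W → Z} (hf : DecCont f) (he : Continuous e) :
    DecCont (f ∘ e) := by
  obtain ⟨A, hdisj, huniv, hΔ, hcont⟩ := hf
  refine ⟨fun n => e ⁻¹' A n, fun m n hmn => (hdisj m n hmn).preimage e,
    by rw [← preimage_iUnion, huniv, preimage_univ], fun n => (hΔ n).preimage he, fun n => ?_⟩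
  have : Continuous (fun x : ↥(e ⁻¹' A n) => (⟨e x.1, x.2⟩ : ↥(A n))) :=
    Continuous.subtype_mk (he.comp continuous_subtype_val) _
  exact (hcont n).comp this

lemma DecCont.mono {A B : Set Z} (hBA : B ⊆ A) (hA : DecCont (A.restrict f)) :
    DecCont (B.restrict f) :=
  hA.comp_continuous (continuous_inclusion hBA)

lemma decCont_univ_restrict (hA : DecCont ((univ : Set Z).restrict f)) : DecCont f :=
  hA.comp_continuous (Continuous.subtype_mk continuous_id _ : Continuous fun z : Z => (⟨z, mem_univ z⟩ : ↥(univ : Set Z)))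

lemma isDelta03_image_val {S : Set Z} (hS : IsDelta03 S) {A : Set ↥S} (hA : IsDelta03 A) :
    IsDelta03 (Subtype.val '' A) := by
  obtain ⟨B1, hB1, hAeq1⟩ := isSigma03_subtype_lift hA.1
  obtain ⟨B2, hB2, hAeq2⟩ := isSigma03_subtype_lift hA.2
  have him : Subtype.val '' A = S ∩ B1 := by
    ext x
    constructor
    · rintro ⟨y, hy, rfl⟩
      exact ⟨y.2, by rw [hAeq1] at hy; exact hy⟩
    · rintro ⟨hxS, hxB⟩
      exact ⟨⟨x, hxS⟩, by rw [hAeq1]; exact hxB, rfl⟩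
  have hcompl : (Subtype.val '' A)ᶜ = Sᶜ ∪ (S ∩ B2) := by
    rw [him]
    ext x
    simp only [mem_compl_iff, mem_inter_iff, mem_union, not_and]
    constructor
    · intro hx
      by_cases hxS : x ∈ S
      · refine Or.inr ⟨hxS, ?_⟩
        have : (⟨x, hxS⟩ : ↥S) ∈ Subtype.val ⁻¹' B2 := by
          rw [← hAeq2]
          intro hmem
          rw [hAeq1] at hmem
          exact hx hxS hmem
        exact this
      · exact Or.inl hxS
    · rintro (hxS | ⟨hxS, hxB⟩) hxS'
      · exact absurd hxS' hxS
      · intro hxB1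
        have h1 : (⟨x, hxS⟩ : ↥S) ∈ A := by rw [hAeq1]; exact hxB1
        have h2 : (⟨x, hxS⟩ : ↥S) ∈ Aᶜ := by rw [hAeq2]; exact hxB
        exact h2 h1
  constructor
  · rw [him]; exact hS.1.inter hB1
  · rw [hcompl]; exact hS.2.union (hS.1.inter hB2)

lemma continuous_image_val_restrict {S : Set Z} {A : Set ↥S} {f : Z → Y}
    (hA : Continuous (A.restrict (S.restrict f))) :
    Continuous ((Subtype.val '' A).restrict f) := by
  have hsub : Subtype.val '' A ⊆ S := by rintro x ⟨y, _, rfl⟩; exact y.2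
  have hmem : ∀ x : ↥(Subtype.val '' A), (⟨x.1, hsub x.2⟩ : ↥S) ∈ A := by
    rintro ⟨x, y, hy, rfl⟩
    exact (by exact hy : (⟨y.1, hsub ⟨y, hy, rfl⟩⟩ : ↥S) ∈ A)
  have : Continuous (fun x : ↥(Subtype.val '' A) => (⟨⟨x.1, hsub x.2⟩, hmem x⟩ : ↥A)) :=
    Continuous.subtype_mk (Continuous.subtype_mk continuous_subtype_val _) _
  exact hA.comp this

lemma decCont_glue_nat [TopologicalSpace.PseudoMetrizableSpace Z] {f : Z → Y}
    (W : ℕ → Set Z) (hcov : (⋃ n, W n) = univ) (hΔ : ∀ n, IsDelta03 (W n))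
    (hdec : ∀ n, DecCont ((W n).restrict f)) : DecCont f := by
  classical
  choose A hdisj huniv hAΔ hAcont using hdec
  set q : ℕ ≃ ℕ × ℕ := (Denumerable.eqv (ℕ × ℕ)).symm with hq
  set T : ℕ → Set Z := fun k => Subtype.val '' (A (q k).1 (q k).2) with hT
  have hTΔ : ∀ k, IsDelta03 (T k) := fun k =>
    isDelta03_image_val (hΔ _) (hAΔ _ _)
  have hTcont : ∀ k, Continuous ((T k).restrict f) := fun k =>
    continuous_image_val_restrict (hAcont _ _)
  have hTcov : (⋃ k, T k) = univ := by
    apply eq_univ_of_univ_subset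
    intro x _
    have hx : x ∈ ⋃ n, W n := hcov ▸ mem_univ x
    obtain ⟨n, hn⟩ := mem_iUnion.1 hx
    have hm' : (⟨x, hn⟩ : ↥(W n)) ∈ ⋃ m, A n m := (huniv n) ▸ mem_univ _
    obtain ⟨m, hm⟩ := mem_iUnion.1 hm'
    refine mem_iUnion.2 ⟨q.symm (n, m), ?_⟩
    show x ∈ Subtype.val '' (A (q (q.symm (n, m))).1 (q (q.symm (n, m))).2)
    rw [q.apply_symm_apply]
    exact ⟨⟨x, hn⟩, hm, rfl⟩
  have hd : ∀ a b : ℕ, a < b →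
      Disjoint (T a ∩ ⋂ j ∈ Finset.range a, (T j)ᶜ) (T b ∩ ⋂ j ∈ Finset.range b, (T j)ᶜ) := by
    intro a b hab
    refine disjoint_left.2 ?_
    rintro x ⟨hxa, _⟩ ⟨_, hxb⟩
    exact (mem_iInter₂.1 hxb a (Finset.mem_range.2 hab)) hxa
  refine ⟨fun k => T k ∩ ⋂ j ∈ Finset.range k, (T j)ᶜ, ?_, ?_, ?_, ?_⟩
  · intro m n hmn
    rcases lt_or_gt_of_ne hmn with hlt | hlt
    · exact hd m n hlt
    · exact (hd n m hlt).symm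
  · apply eq_univ_of_univ_subset
    intro x _
    have hx : x ∈ ⋃ k, T k := hTcov ▸ mem_univ x
    have hex : ∃ k, x ∈ T k := mem_iUnion.1 hx
    obtain ⟨k, hk1, hk2⟩ : ∃ k, x ∈ T k ∧ ∀ j < k, x ∉ T j :=
      ⟨Nat.find hex, Nat.find_spec hex, fun j hj => Nat.find_min hex hj⟩
    exact mem_iUnion.2 ⟨k, hk1, mem_iInter₂.2 fun j hj => hk2 j (Finset.mem_range.1 hj)⟩
  · intro k
    refine (hTΔ k).inter ?_
    induction k with
    | zero => simpa using isDelta03_univ'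
    | succ n ih =>
      rw [Finset.range_add_one, Finset.set_biInter_insert]
      exact ((hTΔ n).compl).inter ih
  · intro k
    exact (hTcont k).comp (continuous_inclusion inter_subset_left)

lemma decCont_glue {ι : Type*} [Countable ι] [TopologicalSpace.PseudoMetrizableSpace Z]
    {f : Z → Y} (W : ι → Set Z) (hcov : (⋃ i, W i) = univ) (hΔ : ∀ i, IsDelta03 (W i))
    (hdec : ∀ i, DecCont ((W i).restrict f)) : DecCont f := by
  rcases isEmpty_or_nonempty ι with hι | hι
  · haveI : IsEmpty Z := ⟨fun z => by
      rw [iUnion_of_empty] at hcov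
      exact absurd (hcov ▸ mem_univ z) (notMem_empty z)⟩
    exact decCont_of_isEmpty f
  · obtain ⟨e, he⟩ := exists_surjective_nat ι
    exact decCont_glue_nat (fun n => W (e n)) (by rw [he.iUnion_comp]; exact hcov)
      (fun n => hΔ _) (fun n => hdec _)

lemma decCont_glue_subset {ι : Type*} [Countable ι] [TopologicalSpace.PseudoMetrizableSpace Z]
    {f : Z → Y} (A : Set Z) (W : ι → Set Z) (hcov : A ⊆ ⋃ i, W i)
    (hΔ : ∀ i, IsDelta03 (Subtype.val ⁻¹' (W i) : Set ↥A))
    (hdec : ∀ i, DecCont ((A ∩ W i).restrict f)) : DecCont (A.restrict f) := by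
  refine decCont_glue (fun i => (Subtype.val ⁻¹' (W i) : Set ↥A)) ?_ hΔ fun i => ?_
  · apply eq_univ_of_univ_subset
    intro x _
    obtain ⟨i, hi⟩ := mem_iUnion.1 (hcov x.2)
    exact mem_iUnion.2 ⟨i, hi⟩
  · have hcont : Continuous (fun x : ↥(Subtype.val ⁻¹' (W i) : Set ↥A) =>
        (⟨x.1.1, ⟨x.1.2, x.2⟩⟩ : ↥(A ∩ W i))) :=
      Continuous.subtype_mk (continuous_subtype_val.comp continuous_subtype_val) _
    exact (hdec i).comp_continuous hcont

end Dec

section Ker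

variable {X P : Type*} [TopologicalSpace X] [TopologicalSpace P] {D : Set X} {h : ↥D → P}

def kerSet (D : Set X) (h : ↥D → P) (S : Set ↥D) : Set X :=
  {x | ∀ U : Set X, IsOpen U → x ∈ U → ¬ DecCont ((S ∩ Subtype.val ⁻¹' U).restrict h)}

lemma decCont_empty_set : DecCont ((∅ : Set ↥D).restrict h) := by
  haveI : IsEmpty (↥(∅ : Set ↥D)) := ⟨fun x => x.2⟩
  exact decCont_of_isEmpty _

lemma isClosed_kerSet (S : Set ↥D) : IsClosed (kerSet D h S) := by
  rw [← isOpen_compl_iff]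
  have heq : (kerSet D h S)ᶜ =
      ⋃₀ {U : Set X | IsOpen U ∧ DecCont ((S ∩ Subtype.val ⁻¹' U).restrict h)} := by
    ext x
    simp only [mem_compl_iff, kerSet, mem_setOf_eq, mem_sUnion]
    push_neg
    exact ⟨fun ⟨U, h1, h2, h3⟩ => ⟨U, ⟨h1, h3⟩, h2⟩, fun ⟨U, ⟨h1, h3⟩, h2⟩ => ⟨U, h1, h2, h3⟩⟩
  rw [heq]
  exact isOpen_sUnion fun U hU => hU.1

lemma kerSet_subset_closure (S : Set ↥D) :
    kerSet D h S ⊆ closure (Subtype.val '' S) := by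
  intro x hx
  by_contra hxc
  have hU : IsOpen (closure (Subtype.val '' S))ᶜ := isClosed_closure.isOpen_compl
  have hemp : S ∩ Subtype.val ⁻¹' (closure (Subtype.val '' S))ᶜ = ∅ := by
    ext y
    simp only [mem_inter_iff, mem_preimage, mem_compl_iff, mem_empty_iff_false, iff_false,
      not_and]
    intro hyS hyc
    exact hyc (subset_closure ⟨y, hyS, rfl⟩)
  exact hx _ hU hxc (by rw [hemp]; exact decCont_empty_set)

variable [TopologicalSpace.MetrizableSpace X] [TopologicalSpace.SeparableSpace X]

lemma secondCountable_of_sep_met : SecondCountableTopology X := by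
  letI := TopologicalSpace.pseudoMetrizableSpacePseudoMetric X
  exact UniformSpace.secondCountable_of_separable X

lemma decCont_off_kerSet (S : Set ↥D) :
    DecCont ((S ∩ Subtype.val ⁻¹' (kerSet D h S)ᶜ).restrict h) := by
  haveI : SecondCountableTopology X := secondCountable_of_sep_met
  obtain ⟨b, hbc, -, hbb⟩ := TopologicalSpace.exists_countable_basis X
  set 𝒢 : Set (Set X) := {W ∈ b | DecCont ((S ∩ Subtype.val ⁻¹' W).restrict h)} with h𝒢
  haveI : Countable ↥𝒢 := (hbc.mono (sep_subset _ _)).to_subtype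
  refine decCont_glue_subset _ (fun i : ↥𝒢 => (Subtype.val ⁻¹' i.1 : Set ↥D)) ?_ ?_ ?_
  · rintro y ⟨hyS, hyk⟩
    obtain ⟨U, hUo, hyU, hUd⟩ : ∃ U, IsOpen U ∧ y.1 ∈ U ∧
        DecCont ((S ∩ Subtype.val ⁻¹' U).restrict h) := by
      have := hyk
      simp only [mem_preimage, mem_compl_iff, kerSet, mem_setOf_eq] at this
      push_neg at this
      obtain ⟨U, h1, h2, h3⟩ := this
      exact ⟨U, h1, h2, h3⟩
    obtain ⟨W, hWb, hyW, hWU⟩ := hbb.exists_subset_of_mem_open hyU hUo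
    have hWd : DecCont ((S ∩ Subtype.val ⁻¹' W).restrict h) :=
      hUd.mono (inter_subset_inter_right _ (preimage_mono hWU))
    exact mem_iUnion.2 ⟨⟨W, hWb, hWd⟩, hyW⟩
  · intro i
    have : IsOpen (Subtype.val ⁻¹' (Subtype.val ⁻¹' i.1 : Set ↥D) :
        Set ↥(S ∩ Subtype.val ⁻¹' (kerSet D h S)ᶜ)) :=
      (((hbb.isOpen i.2.1).preimage continuous_subtype_val).preimage continuous_subtype_val)
    exact this.isDelta03
  · intro i
    refine DecCont.mono ?_ i.2.2
    intro y hy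
    exact ⟨hy.1.1, hy.2⟩

lemma not_decCont_kerSet_inter {S : Set ↥D} {U : Set X} (hU : IsOpen U)
    (hne : (kerSet D h S ∩ U).Nonempty) :
    ¬ DecCont ((S ∩ Subtype.val ⁻¹' (kerSet D h S) ∩ Subtype.val ⁻¹' U).restrict h) := by
  intro hdec
  obtain ⟨x, hxk, hxU⟩ := hne
  refine hxk U hU hxU ?_
  refine decCont_glue_subset _ (fun b : Bool =>
    cond b (Subtype.val ⁻¹' (kerSet D h S) : Set ↥D) (Subtype.val ⁻¹' (kerSet D h S)ᶜ))
    ?_ ?_ ?_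
  · intro y _
    by_cases hy : y.1 ∈ kerSet D h S
    · exact mem_iUnion.2 ⟨true, hy⟩
    · exact mem_iUnion.2 ⟨false, hy⟩
  · rintro (_ | _)
    · exact (((isClosed_kerSet S).isOpen_compl.preimage
        continuous_subtype_val).preimage continuous_subtype_val).isDelta03
    · exact ((((isClosed_kerSet S).preimage
        continuous_subtype_val).preimage continuous_subtype_val)).isDelta03
  · rintro (_ | _)
    · refine DecCont.mono ?_ (decCont_off_kerSet S)
      intro y hy
      exact ⟨hy.1.1, hy.2⟩
    · refine DecCont.mono ?_ hdec
      intro y hy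
      exact ⟨⟨hy.1.1, hy.2⟩, hy.1.2⟩

lemma not_decCont_inter_kerSet {S : Set ↥D} (hS : ¬ DecCont (S.restrict h)) :
    ¬ DecCont ((S ∩ Subtype.val ⁻¹' (kerSet D h S)).restrict h) := by
  intro hdec
  refine hS ?_
  refine decCont_glue_subset _ (fun b : Bool =>
    cond b (Subtype.val ⁻¹' (kerSet D h S) : Set ↥D) (Subtype.val ⁻¹' (kerSet D h S)ᶜ))
    ?_ ?_ ?_
  · intro y _
    by_cases hy : y.1 ∈ kerSet D h S
    · exact mem_iUnion.2 ⟨true, hy⟩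
    · exact mem_iUnion.2 ⟨false, hy⟩
  · rintro (_ | _)
    · exact (((isClosed_kerSet S).isOpen_compl.preimage
        continuous_subtype_val).preimage continuous_subtype_val).isDelta03
    · exact ((((isClosed_kerSet S).preimage
        continuous_subtype_val).preimage continuous_subtype_val)).isDelta03
  · rintro (_ | _)
    · refine DecCont.mono ?_ (decCont_off_kerSet S)
      intro y hy
      exact hy
    · refine DecCont.mono ?_ hdec
      intro y hy
      exact hy

lemma nonempty_inter_kerSet {S : Set ↥D} (hS : ¬ DecCont (S.restrict h)) :
    (S ∩ Subtype.val ⁻¹' (kerSet D h S)).Nonempty := by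
  by_contra hne
  rw [not_nonempty_iff_eq_empty] at hne
  exact not_decCont_inter_kerSet hS (by rw [hne]; exact decCont_empty_set)

end Ker

/-- Lemma 4.1. -/
theorem stmt12 {X P : Type*} [TopologicalSpace X] [TopologicalSpace.SeparableSpace X]
    [TopologicalSpace.MetrizableSpace X]
    [TopologicalSpace P] [TopologicalSpace.SeparableSpace P]
    [TopologicalSpace.MetrizableSpace P]
    (D : Set X) (h : D → P) (hh : Sigma2Measurable h)
    (B : Set (Set P)) (hBc : B.Countable) (hB : TopologicalSpace.IsTopologicalBasis B)
    (hnd : ¬ DecCont h) :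
    ∃ V ∈ B, ∃ E F : Set X, IsClosed E ∧ IsClosed F ∧ E ⊆ F ∧ F ⊆ closure D ∧
      (∀ U : Set X, IsOpen U → (E ∩ U).Nonempty →
        ¬ DecCont ((h ⁻¹' V ∩ Subtype.val ⁻¹' (U ∩ E)).restrict h)) ∧
      (∀ U : Set X, IsOpen U → (F ∩ U).Nonempty →
        ¬ DecCont ((h ⁻¹' (closure V)ᶜ ∩ Subtype.val ⁻¹' (F ∩ U)).restrict h)) ∧
      (E ∩ D).Nonempty := by
  classical
  have hDnd : ¬ DecCont ((univ : Set ↥D).restrict h) := fun hd => hnd (decCont_univ_restrict hd)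
  set F0 : Set X := kerSet D h univ with hF0def
  have hF0closed : IsClosed F0 := isClosed_kerSet _
  set T : Set P → Set ↥D := fun V => h ⁻¹' (closure V)ᶜ ∩ Subtype.val ⁻¹' F0 with hTdef
  set FV : Set P → Set X := fun V => kerSet D h (T V) with hFVdef
  have hFVclosed : ∀ V, IsClosed (FV V) := fun V => isClosed_kerSet _
  set P1 : Set P → Set ↥D := fun V => h ⁻¹' V ∩ Subtype.val ⁻¹' (FV V) with hP1def
  set P2 : Set P → Set ↥D := fun V => T V ∩ Subtype.val ⁻¹' (FV V)ᶜ with hP2def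
  haveI : Countable ↥B := hBc.to_subtype
  -- Key claim: some V ∈ B has a non-decomposable P1-part
  have key : ∃ V ∈ B, ¬ DecCont ((P1 V).restrict h) := by
    by_contra hcon
    push_neg at hcon
    apply hnd
    set R : Set ↥D := Subtype.val ⁻¹' F0 ∩ ⋂ V ∈ B, ((P1 V)ᶜ ∩ (P2 V)ᶜ) with hRdef
    -- h is continuous on R
    have hRcont : Continuous (R.restrict h) := by
      haveI : RegularSpace P := by
        letI := TopologicalSpace.metrizableSpaceMetric P
        infer_instance
      rw [continuous_iff_continuousAt]
      intro x
      rw [continuousAt_def]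
      intro N hN
      obtain ⟨C, hCN, hCc, hCsub⟩ := exists_mem_nhds_isClosed_subset hN
      obtain ⟨V, hVB, hxV, hVsub⟩ :=
        hB.exists_subset_of_mem_open (mem_interior_iff_mem_nhds.2 hCN) isOpen_interior
      have hclV : closure V ⊆ C := by
        calc closure V ⊆ closure (interior C) := closure_mono hVsub
        _ ⊆ closure C := closure_mono interior_subset
        _ = C := hCc.closure_eq
      have hxR : x.1 ∈ R := x.2
      have hxP1 : x.1 ∈ (P1 V)ᶜ ∩ (P2 V)ᶜ := mem_iInter₂.1 hxR.2 V hVB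
      have hxFV : x.1.1 ∉ FV V := by
        intro hmem
        exact hxP1.1 ⟨hxV, hmem⟩
      obtain ⟨U, hUo, hxU, hUd⟩ : ∃ U, IsOpen U ∧ x.1.1 ∈ U ∧
          DecCont ((T V ∩ Subtype.val ⁻¹' U).restrict h) := by
        simp only [hFVdef, kerSet, mem_setOf_eq] at hxFV
        push_neg at hxFV
        obtain ⟨U, h1, h2, h3⟩ := hxFV
        exact ⟨U, h1, h2, h3⟩
      have hmapsto : ∀ y : ↥R, y.1.1 ∈ U → h y.1 ∈ closure V := by
        intro y hyU
        by_contra hyV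
        have hyR : y.1 ∈ R := y.2
        have hyT : y.1 ∈ T V := ⟨hyV, hyR.1⟩
        have hyP2 : y.1 ∈ (P2 V)ᶜ := (mem_iInter₂.1 hyR.2 V hVB).2
        have hyFV : y.1.1 ∈ FV V := by
          by_contra hc
          exact hyP2 ⟨hyT, hc⟩
        have hbad := not_decCont_kerSet_inter (S := T V) (D := D) (h := h) hUo
          ⟨y.1.1, hyFV, hyU⟩
        refine hbad ?_
        refine DecCont.mono ?_ hUd
        intro z hz
        exact ⟨hz.1.1, hz.2⟩
      refine mem_nhds_iff.2 ⟨(fun y : ↥R => y.1.1) ⁻¹' U, ?_, ?_, hxU⟩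
      · intro y hyU
        exact hCsub (hclV (hmapsto y hyU))
      · exact hUo.preimage (continuous_subtype_val.comp continuous_subtype_val)
    -- glue the pieces
    refine decCont_glue (ι := (Unit ⊕ Unit) ⊕ (↥B × Bool))
      (Sum.elim (Sum.elim (fun _ => R) (fun _ => Subtype.val ⁻¹' F0ᶜ))
        (fun p => cond p.2 (P1 p.1.1) (P2 p.1.1))) ?_ ?_ ?_
    · apply eq_univ_of_univ_subset
      intro x _
      by_cases hx0 : x.1 ∈ F0
      · by_cases hxR : x ∈ R
        · exact mem_iUnion.2 ⟨Sum.inl (Sum.inl ()), hxR⟩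
        · have : ¬ x ∈ ⋂ V ∈ B, ((P1 V)ᶜ ∩ (P2 V)ᶜ) := fun hc => hxR ⟨hx0, hc⟩
          simp only [mem_iInter, mem_inter_iff, mem_compl_iff, not_forall, not_and, not_not] at this
          obtain ⟨V, hVB, hVP⟩ := this
          by_cases hP1x : x ∈ P1 V
          · exact mem_iUnion.2 ⟨Sum.inr (⟨V, hVB⟩, true), hP1x⟩
          · exact mem_iUnion.2 ⟨Sum.inr (⟨V, hVB⟩, false), hVP hP1x⟩
      · exact mem_iUnion.2 ⟨Sum.inl (Sum.inr ()), hx0⟩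
    · rintro ((_ | _) | ⟨⟨V, hVB⟩, (_ | _)⟩)
      · -- R is Gδ
        have hGδ : IsGδ R := by
          apply IsGδ.inter
          · exact (hF0closed.preimage continuous_subtype_val).isGδ'
          · refine IsGδ.biInter hBc fun V hV => ?_
            apply IsGδ.inter
            · rw [hP1def, compl_inter]
              apply IsGδ.union
              · exact (hh V (hB.isOpen hV)).compl_isGδ
              · rw [← preimage_compl]
                exact (((hFVclosed V).isOpen_compl).preimage continuous_subtype_val).isGδ
            · rw [hP2def, hTdef, compl_inter, compl_inter]
              apply IsGδ.union
              · apply IsGδ.union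
                · exact (hh (closure V)ᶜ isClosed_closure.isOpen_compl).compl_isGδ
                · rw [← preimage_compl]
                  exact ((hF0closed.isOpen_compl).preimage continuous_subtype_val).isGδ
              · rw [← preimage_compl, compl_compl]
                exact ((hFVclosed V).preimage continuous_subtype_val).isGδ'
        exact hGδ.isDelta03
      · exact ((hF0closed.isOpen_compl).preimage continuous_subtype_val).isDelta03
      · exact (((hh (closure V)ᶜ isClosed_closure.isOpen_compl).isDelta03).inter
          ((hF0closed.preimage continuous_subtype_val).isDelta03)).inter
          ((((hFVclosed V).isOpen_compl).preimage continuous_subtype_val)).isDelta03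
      · exact ((hh V (hB.isOpen hVB)).isDelta03).inter
          ((hFVclosed V).preimage continuous_subtype_val).isDelta03
    · rintro ((_ | _) | ⟨⟨V, hVB⟩, (_ | _)⟩)
      · exact decCont_of_continuous hRcont
      · refine DecCont.mono ?_ (decCont_off_kerSet (univ : Set ↥D))
        intro y hy
        exact ⟨mem_univ _, hy⟩
      · exact decCont_off_kerSet (T V)
      · exact hcon V hVB
  obtain ⟨V, hVB, hVnd⟩ := key
  set E : Set X := kerSet D h (P1 V) with hEdef
  have hEF : E ⊆ FV V := by
    refine (kerSet_subset_closure (P1 V)).trans (closure_minimal ?_ (hFVclosed V))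
    rintro x ⟨y, hy, rfl⟩
    exact hy.2
  have hFF0 : FV V ⊆ F0 := by
    refine (kerSet_subset_closure (T V)).trans (closure_minimal ?_ hF0closed)
    rintro x ⟨y, hy, rfl⟩
    exact hy.2
  refine ⟨V, hVB, E, FV V, isClosed_kerSet _, hFVclosed V, hEF, ?_, ?_, ?_, ?_⟩
  · refine (kerSet_subset_closure (T V)).trans (closure_mono ?_)
    rintro x ⟨y, _, rfl⟩
    exact y.2
  · intro U hU hne
    have hbad := not_decCont_kerSet_inter (S := P1 V) (D := D) (h := h) hU hne
    intro hdec
    refine hbad ?_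
    refine DecCont.mono ?_ hdec
    rintro y ⟨⟨⟨hyV, hyFV⟩, hyE⟩, hyU⟩
    exact ⟨hyV, hyU, hyE⟩
  · intro U hU hne
    have hbad := not_decCont_kerSet_inter (S := T V) (D := D) (h := h) hU hne
    intro hdec
    refine hbad ?_
    refine DecCont.mono ?_ hdec
    rintro y ⟨⟨⟨hyV, hyF0⟩, hyF⟩, hyU⟩
    exact ⟨hyV, hyF, hyU⟩
  · obtain ⟨y, hy1, hy2⟩ := nonempty_inter_kerSet hVnd
    exact ⟨y.1, hy2, y.2⟩
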